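/- arXiv:2403.10329 — 2 statements merged into one kernel-verified Lean document; each statement's English description precedes it below -/
import Mathlib

section
/- For a fixed vector y with strictly positive entries and p > 0, the optimization problem min_x ⟨exp(x), y⟩ subject to ‖x‖₁ ≤ p (where exp is applied entrywise) has a minimizer, and every minimizer x satisfies x ≤ 0 entrywise and ‖x‖₁ = p. -/
/-!
The ℓ¹ ball is compact, so a minimizer exists. The objective strictly decreases whenever one
coordinate is lowered. Reflecting a positive coordinate, or lowering a nonpositive one by the
slack `p - ‖x‖₁`, stays in the ball; hence a minimizer has no positive coordinate and no slack.
-/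

open Function Real

section WeightedExpOverL1Ball

variable {ι : Type*} [Fintype ι]

lemma isCompact_setOf_sum_abs_le (p : ℝ) : IsCompact {x : ι → ℝ | ∑ i, |x i| ≤ p} := by
  refine Metric.isCompact_of_isClosed_isBounded (isClosed_le (by fun_prop) continuous_const) ?_
  refine isBounded_iff_forall_norm_le.2 ⟨p, fun x (hx : ∑ i, |x i| ≤ p) ↦ ?_⟩
  have hp : 0 ≤ p := (Finset.sum_nonneg fun i _ ↦ abs_nonneg (x i)).trans hx
  refine (pi_norm_le_iff_of_nonneg hp).2 fun i ↦ ?_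
  calc ‖x i‖ = |x i| := norm_eq_abs _
    _ ≤ ∑ j, |x j| := Finset.single_le_sum (fun j _ ↦ abs_nonneg (x j)) (Finset.mem_univ i)
    _ ≤ p := hx

variable [DecidableEq ι]

lemma Finset.sum_apply_update_eq {α M : Type*} [AddCommGroup M] (g : ι → α → M) (x : ι → α)
    (i : ι) (a : α) :
    ∑ j, g j (update x i a j) = ∑ j, g j (x j) + (g i a - g i (x i)) := by
  rw [Finset.sum_congr rfl fun j _ ↦ apply_update g x i a j,
    Finset.sum_update_of_mem (Finset.mem_univ i),
    Finset.sum_eq_add_sum_sdiff_singleton_of_mem (Finset.mem_univ i) fun j ↦ g j (x j)]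
  abel

lemma sum_abs_update_neg (x : ι → ℝ) (i : ι) :
    ∑ j, |update x i (-x i) j| = ∑ j, |x j| := by
  simp [Finset.sum_apply_update_eq (fun _ ↦ abs)]

lemma sum_abs_update_sub_of_nonpos {x : ι → ℝ} {i : ι} (hx : x i ≤ 0) {ε : ℝ} (hε : 0 ≤ ε) :
    ∑ j, |update x i (x i - ε) j| = ∑ j, |x j| + ε := by
  rw [Finset.sum_apply_update_eq (fun _ ↦ abs), abs_of_nonpos hx, abs_of_nonpos (by linarith)]
  ring

lemma sum_exp_mul_update_lt {y : ι → ℝ} (hy : ∀ i, 0 < y i) {x : ι → ℝ} {i : ι} {a : ℝ}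
    (ha : a < x i) :
    ∑ j, exp (update x i a j) * y j < ∑ j, exp (x j) * y j := by
  rw [Finset.sum_apply_update_eq (fun j t ↦ exp t * y j)]
  have : (exp a - exp (x i)) * y i < 0 :=
    mul_neg_of_neg_of_pos (sub_neg.2 (exp_lt_exp.2 ha)) (hy i)
  linarith

variable {y : ι → ℝ} {p : ℝ} {x : ι → ℝ}

lemma nonpos_of_isMinOn_sum_exp_mul (hy : ∀ i, 0 < y i) (hx : ∑ i, |x i| ≤ p)
    (hmin : IsMinOn (fun z ↦ ∑ i, exp (z i) * y i) {z | ∑ i, |z i| ≤ p} x) (i : ι) :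
    x i ≤ 0 := by
  by_contra! hi
  have hmem : ∑ j, |update x i (-x i) j| ≤ p := by rwa [sum_abs_update_neg]
  exact (hmin hmem).not_gt (sum_exp_mul_update_lt hy (by linarith))

lemma sum_abs_eq_of_isMinOn_sum_exp_mul [Nonempty ι] (hy : ∀ i, 0 < y i) (hx : ∑ i, |x i| ≤ p)
    (hmin : IsMinOn (fun z ↦ ∑ i, exp (z i) * y i) {z | ∑ i, |z i| ≤ p} x) :
    ∑ i, |x i| = p := by
  refine hx.antisymm (not_lt.1 fun hlt ↦ ?_)
  let i : ι := Classical.arbitrary ι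
  have hmem : ∑ j, |update x i (x i - (p - ∑ k, |x k|)) j| ≤ p := by
    rw [sum_abs_update_sub_of_nonpos (nonpos_of_isMinOn_sum_exp_mul hy hx hmin i) (by linarith)]
    linarith
  exact (hmin hmem).not_gt (sum_exp_mul_update_lt hy (by linarith))

end WeightedExpOverL1Ball

theorem gamma_minimizer_properties {n : ℕ} (hn : 0 < n)
    (y : Fin n → ℝ) (hy : ∀ i, 0 < y i) (p : ℝ) (hp : 0 < p)
    (F : (Fin n → ℝ) → ℝ) (hF : ∀ x, F x = ∑ i, Real.exp (x i) * y i) :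
    (∃ x : Fin n → ℝ, (∑ i, |x i|) ≤ p ∧
        ∀ z : Fin n → ℝ, (∑ i, |z i|) ≤ p → F x ≤ F z) ∧
    (∀ x : Fin n → ℝ, (∑ i, |x i|) ≤ p →
        (∀ z : Fin n → ℝ, (∑ i, |z i|) ≤ p → F x ≤ F z) →
        (∀ i, x i ≤ 0) ∧ (∑ i, |x i|) = p) := by
  obtain rfl : F = fun x ↦ ∑ i, exp (x i) * y i := funext hF
  have : Nonempty (Fin n) := ⟨⟨0, hn⟩⟩
  refine ⟨?_, fun x hx hmin ↦ ⟨nonpos_of_isMinOn_sum_exp_mul hy hx hmin,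
    sum_abs_eq_of_isMinOn_sum_exp_mul hy hx hmin⟩⟩
  have h0 : (0 : Fin n → ℝ) ∈ {z | ∑ i, |z i| ≤ p} := by simpa using hp.le
  obtain ⟨x, hx, hmin⟩ := (isCompact_setOf_sum_abs_le p).exists_isMinOn ⟨0, h0⟩
    (f := fun x ↦ ∑ i, exp (x i) * y i) (by fun_prop)
  exact ⟨x, hx, hmin⟩
end

section
/- In ℝ³, a source position s is generically identifiable from three TDOA equations ‖s − r_{k_p}‖ − ‖s − r_{ℓ_p}‖ = τ_p, p = 1,2,3, only if the index set {k₁, ℓ₁, k₂, ℓ₂, k₃, ℓ₃} contains at least four distinct indices; equivalently, if only three distinct receivers appear among the three pairs, the three TDOA equations are dependent (one is determined by the other two via the consistency relation), so the solution set, if nonempty and noiseless, is not determined by three independent constraints. -/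
/-!
Every TDOA is a difference `d k - d l` of the distances `d i = ‖s - r i‖`. Measured from `d c`,
each of `d a, d b, d c` is a `0/1`-combination of `d a - d b` and `d b - d c`
(namely `(1, 1)`, `(0, 1)`, `(0, 0)`), so the difference of two of them is a
`-1/0/1`-combination.
-/

section SignedCombination

variable {A ι : Type*} [Ring A] (f : ι → A) {a b c : ι}

theorem sub_mem_neg_one_zero_one {α β : A} (hα : α ∈ ({0, 1} : Set A))
    (hβ : β ∈ ({0, 1} : Set A)) : α - β ∈ ({-1, 0, 1} : Set A) := by
  rcases hα with rfl | rfl <;> rcases hβ with rfl | rfl <;> simp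

theorem exists_zero_one_comb_sub {x : ι} (hx : x ∈ ({a, b, c} : Set ι)) :
    ∃ α β : A, α ∈ ({0, 1} : Set A) ∧ β ∈ ({0, 1} : Set A) ∧
      f x - f c = α * (f a - f b) + β * (f b - f c) := by
  rcases hx with rfl | rfl | rfl
  · exact ⟨1, 1, by simp, by simp, by simp only [one_mul]; abel⟩
  · exact ⟨0, 1, by simp, by simp, by simp⟩
  · exact ⟨0, 0, by simp, by simp, by simp⟩

theorem exists_signed_comb_sub {x y : ι} (hx : x ∈ ({a, b, c} : Set ι))
    (hy : y ∈ ({a, b, c} : Set ι)) :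
    ∃ e₁ e₂ : A, e₁ ∈ ({-1, 0, 1} : Set A) ∧ e₂ ∈ ({-1, 0, 1} : Set A) ∧
      f x - f y = e₁ * (f a - f b) + e₂ * (f b - f c) := by
  obtain ⟨αx, βx, hαx, hβx, hx⟩ := exists_zero_one_comb_sub f hx
  obtain ⟨αy, βy, hαy, hβy, hy⟩ := exists_zero_one_comb_sub f hy
  refine ⟨αx - αy, βx - βy, sub_mem_neg_one_zero_one hαx hαy,
    sub_mem_neg_one_zero_one hβx hβy, ?_⟩
  calc f x - f y = (f x - f c) - (f y - f c) := by abel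
    _ = _ := by rw [hx, hy]; noncomm_ring

end SignedCombination

/-- If the three receiver pairs involve only three distinct receivers `a, b, c`, then each
TDOA is a `±1/0`-combination of `τ(s;a,b)` and `τ(s;b,c)`, i.e. the three TDOA equations
are dependent. -/
theorem three_receivers_dependent {R : ℕ} (r : Fin R → EuclideanSpace ℝ (Fin 3))
    (k l : Fin 3 → Fin R) (a b c : Fin R)
    (hkl : ∀ p, k p ∈ ({a, b, c} : Set (Fin R)) ∧ l p ∈ ({a, b, c} : Set (Fin R)))
    (τ : EuclideanSpace ℝ (Fin 3) → Fin R → Fin R → ℝ)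
    (hτ : ∀ s i j, τ s i j = ‖s - r i‖ - ‖s - r j‖) :
    ∀ (s : EuclideanSpace ℝ (Fin 3)) (p : Fin 3),
      ∃ e₁ e₂ : ℝ, e₁ ∈ ({-1, 0, 1} : Set ℝ) ∧ e₂ ∈ ({-1, 0, 1} : Set ℝ) ∧
        τ s (k p) (l p) = e₁ * τ s a b + e₂ * τ s b c := by
  intro s p
  simp only [hτ]
  exact exists_signed_comb_sub (fun i => ‖s - r i‖) (hkl p).1 (hkl p).2
end
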